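/- arXiv:1606.03476 — 3 statements merged into one kernel-verified Lean document; each statement's English description precedes it below -/
import Mathlib

section
/- If ρ, ρ' are occupancy-measure-like functions (nonnegative, positive row sums) inducing the same conditional policies, i.e. ρ(s,a)/Σ_{a'}ρ(s,a') = ρ'(s,a)/Σ_{a'}ρ'(s,a') for all s,a, then H̄(λρ + (1-λ)ρ') = λH̄(ρ) + (1-λ)H̄(ρ') for all λ ∈ [0,1]; conversely if the induced conditionals differ at some (s,a), the inequality is strict for λ ∈ (0,1). -/
/-!
Write `R s = Σ_a ρ(s,a)` and `q = ρ / R`. Then `H̄(ρ) = -Σ_s R s · Σ_a q log q`, so `H̄` is linear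
in the row sums along a segment on which the conditionals `q` stay fixed. In general `H̄` is
positively homogeneous, `λ H̄(ρ) + (1 - λ) H̄(ρ') = H̄(λρ) + H̄((1 - λ)ρ')`, and it is superadditive
termwise by the two-term log-sum inequality
`(x + x') log ((x + x') / (y + y')) ≤ x log (x / y) + x' log (x' / y')`:
this is the convexity of `t log t` at `x / y, x' / y'` with weights `y / (y + y'), y' / (y + y')`,
so it is strict when `x / y ≠ x' / y'`.
-/

open Real Finset

/-- The entropy functional `H̄(ρ) = -Σ_{s,a} ρ(s,a)·log(ρ(s,a)/Σ_{a'} ρ(s,a'))`. -/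
noncomputable def Hbar {S A : Type*} [Fintype S] [Fintype A] (ρ : S → A → ℝ) : ℝ :=
  -∑ s, ∑ a, ρ s a * log (ρ s a / ∑ a', ρ s a')

theorem mul_mul_log_mul_div_self (p y : ℝ) : p * y * log (p * y / y) = y * (p * log p) := by
  rcases eq_or_ne y 0 with rfl | hy
  · simp
  · rw [mul_div_cancel_right₀ p hy]
    ring

theorem mul_log_div_add_lt {x x' y y' : ℝ} (hx : 0 ≤ x) (hx' : 0 ≤ x') (hy : 0 < y)
    (hy' : 0 < y') (hne : x / y ≠ x' / y') :
    (x + x') * log ((x + x') / (y + y')) < x * log (x / y) + x' * log (x' / y') := by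
  have hB : 0 < y + y' := add_pos hy hy'
  have hconv := strictConvexOn_mul_log.2 (Set.mem_Ici.2 (div_nonneg hx hy.le))
    (Set.mem_Ici.2 (div_nonneg hx' hy'.le)) hne (div_pos hy hB) (div_pos hy' hB)
    (by rw [← add_div, div_self hB.ne'])
  have hcomb : y / (y + y') * (x / y) + y' / (y + y') * (x' / y') = (x + x') / (y + y') := by
    field_simp
  simp only [smul_eq_mul, hcomb] at hconv
  calc (x + x') * log ((x + x') / (y + y'))
      = (y + y') * ((x + x') / (y + y') * log ((x + x') / (y + y'))) := by field_simp
    _ < (y + y') * (y / (y + y') * (x / y * log (x / y))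
          + y' / (y + y') * (x' / y' * log (x' / y'))) := mul_lt_mul_of_pos_left hconv hB
    _ = x * log (x / y) + x' * log (x' / y') := by field_simp

theorem mul_log_div_add_le {x x' y y' : ℝ} (hx : 0 ≤ x) (hx' : 0 ≤ x') (hy : 0 < y)
    (hy' : 0 < y') :
    (x + x') * log ((x + x') / (y + y')) ≤ x * log (x / y) + x' * log (x' / y') := by
  rcases ne_or_eq (x / y) (x' / y') with hne | heq
  · exact (mul_log_div_add_lt hx hx' hy hy' hne).le
  obtain ⟨p, rfl, rfl⟩ : ∃ p, x = p * y ∧ x' = p * y' :=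
    ⟨x / y, (div_mul_cancel₀ x hy.ne').symm, by rw [heq, div_mul_cancel₀ x' hy'.ne']⟩
  apply le_of_eq
  rw [← mul_add]
  simp only [mul_mul_log_mul_div_self]
  ring

section Hbar

variable {S A : Type*} [Fintype S] [Fintype A]

theorem Hbar_eq_of_eq_mul {ρ q : S → A → ℝ} {w : S → ℝ} (hw : ∀ s, ∑ a, ρ s a = w s)
    (h : ∀ s a, ρ s a = q s a * w s) :
    Hbar ρ = -∑ s, w s * ∑ a, q s a * log (q s a) := by
  simp only [Hbar, hw]
  simp only [h, mul_mul_log_mul_div_self, mul_sum]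

theorem Hbar_const_mul (c : ℝ) (ρ : S → A → ℝ) :
    Hbar (fun s a => c * ρ s a) = c * Hbar ρ := by
  rcases eq_or_ne c 0 with rfl | hc
  · simp [Hbar]
  · simp only [Hbar, ← mul_sum, mul_div_mul_left _ _ hc, mul_assoc, mul_neg]

theorem Hbar_add_lt {σ σ' : S → A → ℝ} (hσ : ∀ s a, 0 ≤ σ s a) (hσ' : ∀ s a, 0 ≤ σ' s a)
    (hrow : ∀ s, 0 < ∑ a', σ s a') (hrow' : ∀ s, 0 < ∑ a', σ' s a')
    (hne : ∃ s a, σ s a / ∑ a', σ s a' ≠ σ' s a / ∑ a', σ' s a') :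
    Hbar σ + Hbar σ' < Hbar (fun s a => σ s a + σ' s a) := by
  have hle : ∀ s a, (σ s a + σ' s a) * log ((σ s a + σ' s a) / ∑ a', (σ s a' + σ' s a'))
      ≤ σ s a * log (σ s a / ∑ a', σ s a') + σ' s a * log (σ' s a / ∑ a', σ' s a') :=
    fun s a => by
      rw [sum_add_distrib]
      exact mul_log_div_add_le (hσ s a) (hσ' s a) (hrow s) (hrow' s)
  obtain ⟨s₀, a₀, hne⟩ := hne
  have hlt : (σ s₀ a₀ + σ' s₀ a₀) *
        log ((σ s₀ a₀ + σ' s₀ a₀) / ∑ a', (σ s₀ a' + σ' s₀ a'))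
      < σ s₀ a₀ * log (σ s₀ a₀ / ∑ a', σ s₀ a') + σ' s₀ a₀ * log (σ' s₀ a₀ / ∑ a', σ' s₀ a') := by
    rw [sum_add_distrib]
    exact mul_log_div_add_lt (hσ s₀ a₀) (hσ' s₀ a₀) (hrow s₀) (hrow' s₀) hne
  have hsum := sum_lt_sum (fun s _ => sum_le_sum fun a _ => hle s a)
    ⟨s₀, mem_univ s₀, sum_lt_sum (fun a _ => hle s₀ a) ⟨a₀, mem_univ a₀, hlt⟩⟩
  simp only [Hbar, sum_add_distrib] at hsum ⊢
  linarith

theorem Hbar_mix_eq_of_div_eq {ρ ρ' : S → A → ℝ} (hrow : ∀ s, ∑ a', ρ s a' ≠ 0)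
    (hrow' : ∀ s, ∑ a', ρ' s a' ≠ 0)
    (h : ∀ s a, ρ s a / ∑ a', ρ s a' = ρ' s a / ∑ a', ρ' s a') (l : ℝ) :
    Hbar (fun s a => l * ρ s a + (1 - l) * ρ' s a) = l * Hbar ρ + (1 - l) * Hbar ρ' := by
  obtain ⟨q, hq_def⟩ : ∃ q : S → A → ℝ, q = fun s a => ρ s a / ∑ a', ρ s a' := ⟨_, rfl⟩
  have hq : ∀ s a, ρ s a = q s a * ∑ a', ρ s a' := fun s a => by
    simp only [hq_def, div_mul_cancel₀ _ (hrow s)]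
  have hq' : ∀ s a, ρ' s a = q s a * ∑ a', ρ' s a' := fun s a => by
    simp only [hq_def, h, div_mul_cancel₀ _ (hrow' s)]
  rw [Hbar_eq_of_eq_mul (fun _ => rfl) hq, Hbar_eq_of_eq_mul (fun _ => rfl) hq',
    Hbar_eq_of_eq_mul (q := q) (w := fun s => l * ∑ a', ρ s a' + (1 - l) * ∑ a', ρ' s a')
      (fun s => by simp only [sum_add_distrib, mul_sum])
      (fun s a => by linear_combination l * hq s a + (1 - l) * hq' s a)]
  simp only [add_mul, sum_add_distrib, mul_assoc, ← mul_sum]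
  ring

end Hbar

theorem Hbar_strict_concavity_general (S A : Type*) [Fintype S] [Fintype A]
    (ρ ρ' : S → A → ℝ) (hρ : ∀ s a, 0 ≤ ρ s a) (hρ' : ∀ s a, 0 ≤ ρ' s a)
    (hrow : ∀ s, 0 < ∑ a', ρ s a') (hrow' : ∀ s, 0 < ∑ a', ρ' s a') :
    ((∀ s a, ρ s a / ∑ a', ρ s a' = ρ' s a / ∑ a', ρ' s a') →
      ∀ l : ℝ, 0 ≤ l → l ≤ 1 →
        Hbar (fun s a => l * ρ s a + (1 - l) * ρ' s a)
          = l * Hbar ρ + (1 - l) * Hbar ρ') ∧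
    ((∃ s a, ρ s a / ∑ a', ρ s a' ≠ ρ' s a / ∑ a', ρ' s a') →
      ∀ l : ℝ, 0 < l → l < 1 →
        l * Hbar ρ + (1 - l) * Hbar ρ'
          < Hbar (fun s a => l * ρ s a + (1 - l) * ρ' s a)) := by
  refine ⟨fun h l _ _ => Hbar_mix_eq_of_div_eq (fun s => (hrow s).ne') (fun s => (hrow' s).ne')
    h l, fun hne l hl0 hl1 => ?_⟩
  have hl1' : 0 < 1 - l := sub_pos.2 hl1
  rw [← Hbar_const_mul, ← Hbar_const_mul]
  refine Hbar_add_lt (fun s a => mul_nonneg hl0.le (hρ s a))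
    (fun s a => mul_nonneg hl1'.le (hρ' s a))
    (fun s => by simpa only [← mul_sum] using mul_pos hl0 (hrow s))
    (fun s => by simpa only [← mul_sum] using mul_pos hl1' (hrow' s)) ?_
  simpa only [← mul_sum, mul_div_mul_left _ _ hl0.ne', mul_div_mul_left _ _ hl1'.ne'] using hne

/-- Equality case of the concavity of `H̄`: if `ρ` and `ρ'` induce the same conditional
policies then `H̄` is affine along their segment; if the induced conditionals differ
somewhere, the concavity inequality is strict for `λ ∈ (0,1)`. -/
theorem Hbar_strict_concavity (S A : Type*) [Fintype S] [Fintype A] [Nonempty S] [Nonempty A]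
    (ρ ρ' : S → A → ℝ) (hρ : ∀ s a, 0 ≤ ρ s a) (hρ' : ∀ s a, 0 ≤ ρ' s a)
    (hrow : ∀ s, 0 < ∑ a', ρ s a') (hrow' : ∀ s, 0 < ∑ a', ρ' s a') :
    ((∀ s a, ρ s a / ∑ a', ρ s a' = ρ' s a / ∑ a', ρ' s a') →
      ∀ l : ℝ, 0 ≤ l → l ≤ 1 →
        Hbar (fun s a => l * ρ s a + (1 - l) * ρ' s a)
          = l * Hbar ρ + (1 - l) * Hbar ρ') ∧
    ((∃ s a, ρ s a / ∑ a', ρ s a' ≠ ρ' s a / ∑ a', ρ' s a') →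
      ∀ l : ℝ, 0 < l → l < 1 →
        l * Hbar ρ + (1 - l) * Hbar ρ'
          < Hbar (fun s a => l * ρ s a + (1 - l) * ρ' s a)) :=
  Hbar_strict_concavity_general S A ρ ρ' hρ hρ' hrow hrow'
end

section
/- Conversely, if ρ : S × A → ℝ is nonnegative and satisfies the Bellman flow constraints Σ_a ρ(s,a) = p₀(s) + γΣ_{s',a} P(s|s',a)ρ(s',a) for all s, with γ ∈ [0,1) and p₀ a probability distribution with full support, then the policy π_ρ(a|s) = ρ(s,a)/Σ_{a'}ρ(s,a') has occupancy measure exactly ρ, and it is the unique policy with this occupancy measure. -/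
open Finset

variable {S A : Type*}

/-- The `t`-step state distribution `P(s_t = s | π)` under policy `π`, starting from `p₀`,
with transition kernel `P s' a s = P(s | s', a)`. -/
noncomputable def stateDist [Fintype S] [Fintype A]
    (p₀ : S → ℝ) (P : S → A → S → ℝ) (π : S → A → ℝ) : ℕ → S → ℝ
  | 0 => p₀
  | t + 1 => fun s => ∑ s', ∑ a, P s' a s * π s' a * stateDist p₀ P π t s'

/-- The occupancy measure `ρ_π(s,a) = π(a|s)·Σ_t γᵗ P(s_t = s | π)`. -/
noncomputable def occ [Fintype S] [Fintype A]
    (p₀ : S → ℝ) (P : S → A → S → ℝ) (π : S → A → ℝ) (γ : ℝ) (s : S) (a : A) : ℝ :=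
  π s a * ∑' t : ℕ, γ ^ t * stateDist p₀ P π t s

/-!
Under a policy `π` the state distributions evolve by `dₜ₊₁ = dₜ ᵥ* M_π` for the row-stochastic
matrix `M_π(s', s) = Σₐ π(a|s') P(s|s',a)`, so the discounted state visitation `Σₜ γᵗ dₜ` solves
`d = p₀ + γ d M_π`. Since `M_π` does not increase the `ℓ¹` norm, this equation has exactly one
solution when `|γ| < 1`. The marginal `Σₐ ρ(·,a)` solves it for `π_ρ` by the Bellman flow
constraints, so it is the state visitation of `π_ρ`; and whenever `π` has occupancy measure `ρ`,
the state visitation of `π` is again this marginal, which is positive because `p₀` is,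
and `π(a|s)` is recovered from `ρ(s,a)` by dividing by it.
-/

namespace Matrix

variable {n : Type*} [Fintype n] [DecidableEq n] {M : Matrix n n ℝ}

theorem sum_vecMul_of_mem_rowStochastic (hM : M ∈ rowStochastic ℝ n) (x : n → ℝ) :
    ∑ j, (x ᵥ* M) j = ∑ i, x i := by
  simp only [vecMul, dotProduct]
  rw [sum_comm]
  simp [← mul_sum, sum_row_of_mem_rowStochastic hM]

theorem sum_abs_vecMul_le_of_mem_rowStochastic (hM : M ∈ rowStochastic ℝ n) (x : n → ℝ) :
    ∑ j, |(x ᵥ* M) j| ≤ ∑ i, |x i| := by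
  calc ∑ j, |(x ᵥ* M) j| ≤ ∑ j, ((fun i => |x i|) ᵥ* M) j := by
        refine sum_le_sum fun j _ => (abs_sum_le_sum_abs _ _).trans_eq ?_
        simp only [vecMul, dotProduct, abs_mul, abs_of_nonneg (nonneg_of_mem_rowStochastic hM)]
    _ = ∑ i, |x i| := sum_vecMul_of_mem_rowStochastic hM _

theorem eq_zero_of_eq_smul_vecMul_of_mem_rowStochastic (hM : M ∈ rowStochastic ℝ n) {γ : ℝ}
    (hγ : |γ| < 1) {x : n → ℝ} (hx : x = γ • (x ᵥ* M)) : x = 0 := by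
  have hle : ∑ i, |x i| ≤ |γ| * ∑ i, |x i| :=
    calc ∑ i, |x i| = |γ| * ∑ j, |(x ᵥ* M) j| := by
          conv_lhs => rw [hx]
          simp [abs_mul, mul_sum]
      _ ≤ |γ| * ∑ i, |x i| :=
          mul_le_mul_of_nonneg_left (sum_abs_vecMul_le_of_mem_rowStochastic hM x) (abs_nonneg γ)
  have hzero : ∑ i, |x i| = 0 := by
    nlinarith [sum_nonneg fun i (_ : i ∈ univ) => abs_nonneg (x i)]
  funext i
  simpa using (sum_eq_zero_iff_of_nonneg fun i _ => abs_nonneg (x i)).1 hzero i (mem_univ i)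

noncomputable def discountedVisits (x : n → ℝ) (M : Matrix n n ℝ) (γ : ℝ) : n → ℝ :=
  fun j => ∑' t, γ ^ t * (x ᵥ* M ^ t) j

theorem summable_discounted_vecMul_pow (hM : M ∈ rowStochastic ℝ n) {γ : ℝ} (hγ : |γ| < 1)
    (x : n → ℝ) (j : n) : Summable fun t => γ ^ t * (x ᵥ* M ^ t) j := by
  refine ((summable_geometric_of_lt_one (abs_nonneg γ) hγ).mul_right
    (∑ i, |x i|)).of_norm_bounded fun t => ?_
  have hj : |(x ᵥ* M ^ t) j| ≤ ∑ i, |x i| :=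
    (single_le_sum (fun k _ => abs_nonneg ((x ᵥ* M ^ t) k)) (mem_univ j)).trans
      (sum_abs_vecMul_le_of_mem_rowStochastic (pow_mem hM t) x)
  rw [Real.norm_eq_abs, abs_mul, abs_pow]
  exact mul_le_mul_of_nonneg_left hj (pow_nonneg (abs_nonneg γ) t)

theorem discountedVisits_eq_add_smul_vecMul (hM : M ∈ rowStochastic ℝ n) {γ : ℝ}
    (hγ : |γ| < 1) (x : n → ℝ) :
    discountedVisits x M γ = x + γ • (discountedVisits x M γ ᵥ* M) := by
  have hsum := summable_discounted_vecMul_pow hM hγ x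
  funext j
  have hstep : ∀ t, γ ^ (t + 1) * (x ᵥ* M ^ (t + 1)) j
      = γ * ∑ i, γ ^ t * (x ᵥ* M ^ t) i * M i j := by
    intro t
    rw [pow_succ γ, pow_succ M, ← vecMul_vecMul]
    change γ ^ t * γ * ∑ i, (x ᵥ* M ^ t) i * M i j = _
    rw [mul_sum, mul_sum]
    exact sum_congr rfl fun i _ => by ring
  simp only [discountedVisits, Pi.add_apply, Pi.smul_apply, smul_eq_mul]
  rw [(hsum j).tsum_eq_zero_add, tsum_congr hstep, tsum_mul_left,
    Summable.tsum_finsetSum fun i _ => (hsum i).mul_right _]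
  simp only [pow_zero, one_mul, vecMul_one, tsum_mul_right]
  rfl

theorem eq_discountedVisits_of_eq_add_smul_vecMul (hM : M ∈ rowStochastic ℝ n) {γ : ℝ}
    (hγ : |γ| < 1) {x y : n → ℝ} (hy : y = x + γ • (y ᵥ* M)) :
    y = discountedVisits x M γ := by
  have hd := discountedVisits_eq_add_smul_vecMul hM hγ x
  refine sub_eq_zero.1 (eq_zero_of_eq_smul_vecMul_of_mem_rowStochastic hM hγ ?_)
  conv_lhs => rw [hy, hd]
  rw [sub_vecMul, smul_sub]
  abel

end Matrix

open Matrix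

section Policy

variable [Fintype S] [Fintype A]

noncomputable def policyMatrix (P : S → A → S → ℝ) (π : S → A → ℝ) : Matrix S S ℝ :=
  Matrix.of fun s' s => ∑ a, π s' a * P s' a s

theorem policyMatrix_mem_rowStochastic [DecidableEq S] {P : S → A → S → ℝ} {π : S → A → ℝ}
    (hP : ∀ s' a s, 0 ≤ P s' a s) (hPsum : ∀ s' a, ∑ s, P s' a s = 1)
    (hπ : ∀ s a, 0 ≤ π s a) (hπsum : ∀ s, ∑ a, π s a = 1) :
    policyMatrix P π ∈ rowStochastic ℝ S := by
  refine mem_rowStochastic_iff_sum.2 ⟨fun s' s => ?_, fun s' => ?_⟩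
  · exact sum_nonneg fun a _ => mul_nonneg (hπ s' a) (hP s' a s)
  · simp only [policyMatrix, of_apply]
    rw [sum_comm]
    simp [← mul_sum, hPsum, hπsum]

theorem stateDist_eq_vecMul_pow [DecidableEq S] (p₀ : S → ℝ) (P : S → A → S → ℝ)
    (π : S → A → ℝ) (t : ℕ) : stateDist p₀ P π t = p₀ ᵥ* policyMatrix P π ^ t := by
  induction t with
  | zero => simp [stateDist]
  | succ t ih =>
    rw [pow_succ, ← vecMul_vecMul, ← ih]
    funext s
    simp only [stateDist, vecMul, dotProduct, policyMatrix, of_apply, mul_sum]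
    exact sum_congr rfl fun s' _ => sum_congr rfl fun a _ => by ring

theorem occ_eq_mul_discountedVisits [DecidableEq S] (p₀ : S → ℝ) (P : S → A → S → ℝ)
    (π : S → A → ℝ) (γ : ℝ) (s : S) (a : A) :
    occ p₀ P π γ s a = π s a * discountedVisits p₀ (policyMatrix P π) γ s := by
  simp only [occ, discountedVisits, stateDist_eq_vecMul_pow]

theorem sum_occ_eq_discountedVisits [DecidableEq S] (p₀ : S → ℝ) (P : S → A → S → ℝ)
    {π : S → A → ℝ} (hπsum : ∀ s, ∑ a, π s a = 1) (γ : ℝ) (s : S) :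
    ∑ a, occ p₀ P π γ s a = discountedVisits p₀ (policyMatrix P π) γ s := by
  simp only [occ_eq_mul_discountedVisits, ← sum_mul, hπsum, one_mul]

theorem sum_eq_add_smul_vecMul_policyMatrix_div_sum {p₀ : S → ℝ} {P : S → A → S → ℝ} {γ : ℝ}
    {ρ : S → A → ℝ} (hρ : ∀ s, ∑ a, ρ s a ≠ 0)
    (hflow : ∀ s, ∑ a, ρ s a = p₀ s + γ * ∑ s', ∑ a, P s' a s * ρ s' a) :
    (fun s => ∑ a, ρ s a) = p₀ + γ • ((fun s => ∑ a, ρ s a) ᵥ*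
      policyMatrix P (fun s a => ρ s a / ∑ a', ρ s a')) := by
  funext s
  simp only [hflow s, Pi.add_apply, Pi.smul_apply, smul_eq_mul, vecMul, dotProduct,
    policyMatrix, of_apply]
  congr 2
  refine sum_congr rfl fun s' _ => ?_
  rw [mul_sum]
  refine sum_congr rfl fun a _ => ?_
  field_simp [hρ s']

end Policy

theorem bellman_flow_occ_unique_general [Fintype S] [Fintype A]
    (p₀ : S → ℝ) (P : S → A → S → ℝ) (γ : ℝ)
    (hγ0 : 0 ≤ γ) (hγ1 : γ < 1)
    (hp₀ : ∀ s, 0 < p₀ s)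
    (hP : ∀ s' a s, 0 ≤ P s' a s) (hPsum : ∀ s' a, ∑ s, P s' a s = 1)
    (ρ : S → A → ℝ) (hρ : ∀ s a, 0 ≤ ρ s a)
    (hflow : ∀ s, ∑ a, ρ s a = p₀ s + γ * ∑ s', ∑ a, P s' a s * ρ s' a) :
    (∀ s a, occ p₀ P (fun s a => ρ s a / ∑ a', ρ s a') γ s a = ρ s a) ∧
    (∀ π' : S → A → ℝ, (∀ s a, 0 ≤ π' s a) → (∀ s, ∑ a, π' s a = 1) →
      (∀ s a, occ p₀ P π' γ s a = ρ s a) →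
      ∀ s a, π' s a = ρ s a / ∑ a', ρ s a') := by
  classical
  have hγ : |γ| < 1 := abs_lt.2 ⟨by linarith, hγ1⟩
  have hmarg : ∀ s, 0 < ∑ a, ρ s a := fun s => by
    rw [hflow s]
    exact add_pos_of_pos_of_nonneg (hp₀ s) (mul_nonneg hγ0
      (sum_nonneg fun s' _ => sum_nonneg fun a _ => mul_nonneg (hP s' a s) (hρ s' a)))
  have hπρ : ∀ s a, 0 ≤ ρ s a / ∑ a', ρ s a' := fun s a => div_nonneg (hρ s a) (hmarg s).le
  have hπρsum : ∀ s, ∑ a, ρ s a / ∑ a', ρ s a' = 1 := fun s => by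
    rw [← sum_div, div_self (hmarg s).ne']
  have hvisits := eq_discountedVisits_of_eq_add_smul_vecMul
    (policyMatrix_mem_rowStochastic hP hPsum hπρ hπρsum) hγ
    (sum_eq_add_smul_vecMul_policyMatrix_div_sum (fun s => (hmarg s).ne') hflow)
  refine ⟨fun s a => ?_, fun π' _ hπ'sum hocc s a => ?_⟩
  · rw [occ_eq_mul_discountedVisits, ← hvisits]
    exact div_mul_cancel₀ _ (hmarg s).ne'
  · have hvisits' : discountedVisits p₀ (policyMatrix P π') γ s = ∑ a, ρ s a := by
      rw [← sum_occ_eq_discountedVisits p₀ P hπ'sum]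
      exact sum_congr rfl fun a _ => hocc s a
    rw [eq_div_iff (hmarg s).ne', ← hvisits', ← occ_eq_mul_discountedVisits, hocc]

/-- Theorem 2 of Syed et al. (2008): if a nonnegative `ρ` satisfies the Bellman flow
constraints, then the policy `π_ρ(a|s) = ρ(s,a)/Σ_{a'}ρ(s,a')` has occupancy measure
exactly `ρ`, and any policy whose occupancy measure is `ρ` equals `π_ρ`. -/
theorem bellman_flow_occ_unique [Fintype S] [Fintype A] [Nonempty S] [Nonempty A]
    (p₀ : S → ℝ) (P : S → A → S → ℝ) (γ : ℝ)
    (hγ0 : 0 ≤ γ) (hγ1 : γ < 1)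
    (hp₀ : ∀ s, 0 < p₀ s) (hp₀sum : ∑ s, p₀ s = 1)
    (hP : ∀ s' a s, 0 ≤ P s' a s) (hPsum : ∀ s' a, ∑ s, P s' a s = 1)
    (ρ : S → A → ℝ) (hρ : ∀ s a, 0 ≤ ρ s a)
    (hflow : ∀ s, ∑ a, ρ s a = p₀ s + γ * ∑ s', ∑ a, P s' a s * ρ s' a) :
    (∀ s a, occ p₀ P (fun s a => ρ s a / ∑ a', ρ s a') γ s a = ρ s a) ∧
    (∀ π' : S → A → ℝ, (∀ s a, 0 ≤ π' s a) → (∀ s, ∑ a, π' s a = 1) →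
      (∀ s a, occ p₀ P π' γ s a = ρ s a) →
      ∀ s a, π' s a = ρ s a / ∑ a', ρ s a') :=
  bellman_flow_occ_unique_general p₀ P γ hγ0 hγ1 hp₀ hP hPsum ρ hρ hflow
end

section
/- Let φ : ℝ → ℝ be strictly decreasing and convex with range T' and let T = -T' be the range of -φ. Define g_φ(x) = -x + φ(-φ⁻¹(-x)) for x ∈ T and +∞ otherwise. Then g_φ is convex. -/
open Classical in
/-- Given a strictly decreasing convex `φ : ℝ → ℝ`, the function
`g_φ(x) = -x + φ(-φ⁻¹(-x))` for `x` in the range `T` of `-φ`, and `+∞` otherwise. -/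
noncomputable def gPhi (φ : ℝ → ℝ) : ℝ → EReal := fun x =>
  if x ∈ Set.range (fun y => -φ y) then
    ((-x + φ (-(Function.invFun φ (-x))) : ℝ) : EReal)
  else ⊤

/-!
On `T`, `g_φ` is the sum of the linear map `x ↦ -x` and `φ ∘ ψ` with `ψ x = -φ⁻¹(-x)`.
The inverse of a strictly decreasing convex function is convex, so `ψ` is concave, and a
nonincreasing convex function of a concave one is convex. Extending by `+∞` off the convex
set `T` preserves convexity.
-/

open Set Function

theorem ConvexOn.ereal_extension_le {E : Type*} [AddCommMonoid E] [Module ℝ E] {s : Set E}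
    {f : E → ℝ} {g : E → EReal} (hf : ConvexOn ℝ s f) (hg : ∀ x ∈ s, g x = f x)
    (hg_top : ∀ x ∉ s, g x = ⊤) {x y : E} {a b : ℝ} (ha : 0 ≤ a) (hb : 0 ≤ b)
    (hab : a + b = 1) :
    g (a • x + b • y) ≤ a * g x + b * g y := by
  have hmul_ne_bot : ∀ {c : ℝ} (z : E), 0 < c → (c : EReal) * g z ≠ ⊥ := by
    intro c z hc
    by_cases hz : z ∈ s
    · rw [hg z hz, ← EReal.coe_mul]; exact EReal.coe_ne_bot _
    · rw [hg_top z hz, EReal.coe_mul_top_of_pos hc]; simp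
  -- `0 * ⊤ = 0` in `EReal`, so the endpoint cases hold even off `s`.
  rcases ha.eq_or_lt with rfl | ha
  · simp [show b = 1 by linarith]
  rcases hb.eq_or_lt with rfl | hb
  · simp [show a = 1 by linarith]
  by_cases hx : x ∈ s
  swap
  · rw [hg_top x hx, EReal.coe_mul_top_of_pos ha, EReal.top_add_of_ne_bot (hmul_ne_bot y hb)]
    exact le_top
  by_cases hy : y ∈ s
  swap
  · rw [hg_top y hy, EReal.coe_mul_top_of_pos hb, EReal.add_top_of_ne_bot (hmul_ne_bot x ha)]
    exact le_top
  rw [hg _ (hf.1 hx hy ha.le hb.le hab), hg x hx, hg y hy]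
  exact_mod_cast hf.2 hx hy ha.le hb.le hab

namespace StrictAnti

variable {φ : ℝ → ℝ}

theorem convexOn_invFun (hmono : StrictAnti φ) (hconv : ConvexOn ℝ univ φ) :
    ConvexOn ℝ (range φ) (invFun φ) := by
  have hrange : Convex ℝ (range φ) :=
    (isPreconnected_range (continuousOn_univ.1 (hconv.continuousOn isOpen_univ))).convex
  refine ⟨hrange, ?_⟩
  rintro _ ⟨u, rfl⟩ _ ⟨v, rfl⟩ a b ha hb hab
  obtain ⟨w, hw⟩ := hrange (mem_range_self u) (mem_range_self v) ha hb hab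
  have hinv := leftInverse_invFun hmono.injective
  rw [← hw, hinv, hinv, hinv, smul_eq_mul, smul_eq_mul, ← hmono.le_iff_ge, hw]
  exact hconv.2 (mem_univ u) (mem_univ v) ha hb hab

theorem concaveOn_neg_invFun_neg (hmono : StrictAnti φ) (hconv : ConvexOn ℝ univ φ) :
    ConcaveOn ℝ (range fun y => -φ y) fun x => -invFun φ (-x) := by
  have hdom : (-LinearMap.id : ℝ →ₗ[ℝ] ℝ) ⁻¹' range φ = range fun y => -φ y := by
    ext x
    simp [neg_eq_iff_eq_neg]
  exact hdom ▸ ((hmono.convexOn_invFun hconv).comp_linearMap (-LinearMap.id)).neg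

end StrictAnti

/-- If `φ` is strictly decreasing and convex, then `g_φ` is convex
(as an extended-real-valued function on ℝ). -/
theorem gPhi_convex (φ : ℝ → ℝ) (hmono : StrictAnti φ)
    (hconv : ConvexOn ℝ Set.univ φ) :
    ∀ x y : ℝ, ∀ a b : ℝ, 0 ≤ a → 0 ≤ b → a + b = 1 →
      gPhi φ (a * x + b * y) ≤ (a : EReal) * gPhi φ x + (b : EReal) * gPhi φ y := by
  intro x y a b ha hb hab
  have hinner := hmono.concaveOn_neg_invFun_neg hconv
  have himage : (fun x => -invFun φ (-x)) '' range (fun y => -φ y) = univ :=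
    eq_univ_of_forall fun t =>
      ⟨-φ (-t), mem_range_self _, by simp [leftInverse_invFun hmono.injective (-t)]⟩
  have hreal : ConvexOn ℝ (range fun y => -φ y) fun x => -x + φ (-invFun φ (-x)) :=
    (concaveOn_id hinner.1).neg.add
      ((himage ▸ hconv).comp_concaveOn hinner (himage ▸ hmono.antitone.antitoneOn _))
  exact hreal.ereal_extension_le (g := gPhi φ) (fun x hx => if_pos hx) (fun x hx => if_neg hx)
    ha hb hab
end
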